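/- For integers n ≥ 1: ∑_{l=0}^{n} C(n,l) 2^{-l} B_l B_{n-l}(x) = (n/2^n)(2x-1) B_{n-1}(2x) - ((n-1)/2^n) B_n(2x) - (n/4) B_{n-1}(x), as an identity of polynomials in x. -/

import Mathlib

/-!
Both sides, as sequences of polynomials indexed by `n`, are Appell sequences (`p n' = n p (n - 1)`):
the left one as a binomial convolution with the Appell sequence `B_n(x)`, the right one by direct
differentiation. An Appell sequence is determined by `p 0` and the increments `p n (1) - p n (0)`
for `n ≥ 2`, because the increment of `p (n + 1)` fixes the constant of integration of `p n`.
Both sides equal `1` at `n = 0`, and both increments are `n 2^(1-n) B_{n-1}`: on the left because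
`B_k(1) - B_k(0)` vanishes unless `k = 1`, on the right because `B_k(2) = B_k(1) + k`.
-/

open Polynomial

namespace Polynomial

section Appell

variable {R : Type*}

-- At `n = 0` the factor `n` makes this say that `p 0` is constant.
def IsAppell [Semiring R] (p : ℕ → R[X]) : Prop :=
  ∀ n, derivative (p n) = n * p (n - 1)

theorem isAppell_bernoulli : IsAppell bernoulli := derivative_bernoulli

section CommSemiring

variable [CommSemiring R]

noncomputable def binomialConvolution (a : ℕ → R) (f : ℕ → R[X]) (n : ℕ) : R[X] :=
  ∑ l ∈ Finset.range (n + 1), C (n.choose l * a l) * f (n - l)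

theorem IsAppell.binomialConvolution {f : ℕ → R[X]} (hf : IsAppell f) (a : ℕ → R) :
    IsAppell (binomialConvolution a f) := by
  rintro (_ | n)
  · simp [Polynomial.binomialConvolution, hf 0]
  unfold Polynomial.binomialConvolution
  rw [derivative_sum]
  simp only [derivative_C_mul, hf _, Finset.sum_range_succ _ (n + 1), Nat.sub_self, Nat.cast_zero,
    zero_mul, mul_zero, add_zero, Nat.add_sub_cancel, Finset.mul_sum]
  refine Finset.sum_congr rfl fun l _ => ?_
  rw [show n + 1 - l - 1 = n - l by omega, ← C_eq_natCast, ← C_eq_natCast, ← mul_assoc,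
    ← mul_assoc, ← C_mul, ← C_mul]
  congr 2
  rw [mul_right_comm, ← Nat.cast_mul, ← Nat.choose_mul_succ_eq, Nat.cast_mul]
  ring

end CommSemiring

theorem eval_sub_eval_of_derivative_eq_C [CommRing R] [IsAddTorsionFree R] {r : R[X]} {k : R}
    (h : derivative r = C k) (a b : R) : r.eval b - r.eval a = k * (b - a) := by
  obtain ⟨c, hc⟩ : ∃ c, r - C k * X = C c :=
    ⟨_, eq_C_of_derivative_eq_zero (by simp [h])⟩
  rw [sub_eq_iff_eq_add] at hc
  simp only [hc, eval_add, eval_mul, eval_C, eval_X]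
  ring

theorem IsAppell.eq_of_eval_sub_eval [CommRing R] [IsDomain R] [CharZero R] {p q : ℕ → R[X]}
    (hp : IsAppell p) (hq : IsAppell q) (h0 : p 0 = q 0) {a b : R} (hab : a ≠ b)
    (h : ∀ n, (p (n + 2)).eval b - (p (n + 2)).eval a = (q (n + 2)).eval b - (q (n + 2)).eval a) :
    p = q := by
  have hr (n : ℕ) : derivative (p (n + 1) - q (n + 1)) = (n + 1) * (p n - q n) := by
    simp [hp (n + 1), hq (n + 1), mul_sub]
  suffices ∀ n, p n - q n = 0 from _root_.funext fun n => sub_eq_zero.1 (this n)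
  intro n
  induction n with
  | zero => simp [h0]
  | succ n ih =>
    obtain ⟨c, hc⟩ : ∃ c, p (n + 1) - q (n + 1) = C c :=
      ⟨_, eq_C_of_derivative_eq_zero (by rw [hr, ih, mul_zero])⟩
    have hslope : derivative (p (n + 2) - q (n + 2)) = C ((n + 2) * c) := by
      rw [hr, hc, C_mul, map_add, map_natCast, map_ofNat]
      push_cast
      ring
    have hc0 : c = 0 := by
      have hincr := eval_sub_eval_of_derivative_eq_C hslope a b
      simp only [eval_sub] at hincr
      have hn : (n + 2 : R) ≠ 0 := by exact_mod_cast (by omega : n + 2 ≠ 0)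
      have : (n + 2 : R) * c * (b - a) = 0 := by linear_combination h n - hincr
      simpa [hn, sub_eq_zero, hab.symm] using this
    rw [hc, hc0, C_0]

end Appell

theorem bernoulli_eval_one_sub_eval_zero (k : ℕ) :
    (bernoulli k).eval 1 - (bernoulli k).eval 0 = if k = 1 then 1 else 0 := by
  rw [bernoulli_eval_one, bernoulli_eval_zero]
  split_ifs with hk
  · norm_num [hk, bernoulli'_one, _root_.bernoulli_one]
  · rw [bernoulli_eq_bernoulli'_of_ne_one hk, sub_self]

theorem bernoulli_eval_two (k : ℕ) : (bernoulli k).eval 2 = bernoulli' k + k := by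
  simpa [bernoulli_eval_one, one_add_one_eq_two] using bernoulli_eval_one_add k 1

theorem eval_one_sub_eval_zero_binomialConvolution_bernoulli (a : ℕ → ℚ) (n : ℕ) :
    (binomialConvolution a bernoulli (n + 1)).eval 1
      - (binomialConvolution a bernoulli (n + 1)).eval 0 = (n + 1) * a n := by
  simp only [binomialConvolution, eval_finsetSum, eval_mul, eval_C, ← Finset.sum_sub_distrib,
    ← mul_sub, bernoulli_eval_one_sub_eval_zero]
  rw [Finset.sum_eq_single n]
  · simp
  · intro l _ hl
    rw [if_neg (by omega), mul_zero]
  · simp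

end Polynomial

noncomputable def bernoulliHalfConvClosedForm (n : ℕ) : ℚ[X] :=
  C ((n : ℚ) / 2 ^ n) * (C 2 * X - 1) * (Polynomial.bernoulli (n - 1)).comp (C 2 * X)
    - C (((n : ℚ) - 1) / 2 ^ n) * (Polynomial.bernoulli n).comp (C 2 * X)
    - C ((n : ℚ) / 4) * Polynomial.bernoulli (n - 1)

theorem isAppell_bernoulliHalfConvClosedForm : IsAppell bernoulliHalfConvClosedForm := by
  rintro (_ | n)
  · simp [bernoulliHalfConvClosedForm]
  apply Polynomial.funext
  intro y
  simp only [bernoulliHalfConvClosedForm, Nat.cast_add, Nat.cast_one, add_tsub_cancel_right,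
    derivative_sub, derivative_mul, derivative_C, zero_mul, derivative_X,
    mul_one, zero_add, derivative_one, sub_zero, derivative_comp, derivative_bernoulli, mul_comp,
    natCast_comp, add_comp, one_comp, eval_sub, eval_add, eval_mul, eval_C, eval_comp, eval_X,
    eval_one, eval_natCast]
  field_simp
  ring

theorem eval_one_sub_eval_zero_bernoulliHalfConvClosedForm (m : ℕ) :
    (bernoulliHalfConvClosedForm (m + 2)).eval 1 - (bernoulliHalfConvClosedForm (m + 2)).eval 0
      = (m + 2) * (1 / 2 ^ (m + 1) * _root_.bernoulli (m + 1)) := by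
  simp only [bernoulliHalfConvClosedForm, show m + 2 - 1 = m + 1 by omega, eval_sub, eval_mul,
    eval_C, eval_X, eval_one, eval_comp, mul_one, mul_zero, bernoulli_eval_two, bernoulli_eval_one,
    bernoulli_eval_zero]
  push_cast
  rcases m with _ | m
  · norm_num [bernoulli'_one, _root_.bernoulli_one, bernoulli'_two, _root_.bernoulli_two]
  · rw [← bernoulli_eq_bernoulli'_of_ne_one (by omega),
      ← bernoulli_eq_bernoulli'_of_ne_one (by omega)]
    field_simp
    ring

theorem bernoulli_half_convolution_general (n : ℕ) (x : ℚ) :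
    ∑ l ∈ Finset.range (n + 1),
        (n.choose l : ℚ) * (1 / 2 ^ l) * _root_.bernoulli l * (Polynomial.bernoulli (n - l)).eval x
      = ((n : ℚ) / 2 ^ n) * (2 * x - 1) * (Polynomial.bernoulli (n - 1)).eval (2 * x)
        - (((n : ℚ) - 1) / 2 ^ n) * (Polynomial.bernoulli n).eval (2 * x)
        - ((n : ℚ) / 4) * (Polynomial.bernoulli (n - 1)).eval x := by
  have hconv := isAppell_bernoulli.binomialConvolution fun l => 1 / 2 ^ l * _root_.bernoulli l
  have h := hconv.eq_of_eval_sub_eval isAppell_bernoulliHalfConvClosedForm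
    (by simp [binomialConvolution, bernoulliHalfConvClosedForm]) zero_ne_one fun m => by
      rw [eval_one_sub_eval_zero_binomialConvolution_bernoulli,
        eval_one_sub_eval_zero_bernoulliHalfConvClosedForm]
      push_cast
      ring
  simpa [binomialConvolution, bernoulliHalfConvClosedForm, eval_finsetSum, eval_comp, mul_assoc]
    using congrArg (eval x) (congrFun h n)

theorem bernoulli_half_convolution (n : ℕ) (hn : 1 ≤ n) (x : ℚ) :
    ∑ l ∈ Finset.range (n + 1),
        (n.choose l : ℚ) * (1 / 2 ^ l) * _root_.bernoulli l * (Polynomial.bernoulli (n - l)).eval x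
      = ((n : ℚ) / 2 ^ n) * (2 * x - 1) * (Polynomial.bernoulli (n - 1)).eval (2 * x)
        - (((n : ℚ) - 1) / 2 ^ n) * (Polynomial.bernoulli n).eval (2 * x)
        - ((n : ℚ) / 4) * (Polynomial.bernoulli (n - 1)).eval x :=
  bernoulli_half_convolution_general n x
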